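/- arXiv:1703.06605 — 3 statements merged into one kernel-verified Lean document; each statement's English description precedes it below -/
import Mathlib

section
/- Let ε ∈ [0,1) and w, v ∈ ℂⁿ with minₖ |wₖ| ≥ 1 - ε and minₖ |vₖ| ≥ 1 - ε. Define 𝒫 : ℂⁿ → ℂⁿ by (𝒫u)ₖ = uₖ/|uₖ| (for nonzero entries). Then d₂(𝒫w, 𝒫v) ≤ (1 - ε)^{-1} d₂(w, v). -/
noncomputable section

namespace PhaseSync

open Complex

variable {n : ℕ}

/-- Euclidean (ℓ²) norm on `Fin n → ℂ`. -/
def l2norm (v : Fin n → ℂ) : ℝ :=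
  Real.sqrt (∑ k, ‖v k‖ ^ 2)

/-- Entrywise sup (ℓ∞) norm on `Fin n → ℂ`. -/
def linfnorm (v : Fin n → ℂ) : ℝ :=
  ⨆ k, ‖v k‖

/-- Hermitian inner product `x*y = ∑ₖ conj(xₖ) yₖ`. -/
def herm (x y : Fin n → ℂ) : ℂ :=
  ∑ k, (starRingEnd ℂ) (x k) * y k

/-- Distance up to a global phase: `d₂(x,y) = inf_θ ‖x e^{iθ} - y‖₂`. -/
def d2 (x y : Fin n → ℂ) : ℝ :=
  ⨅ θ : ℝ, l2norm (fun k => Complex.exp (θ * Complex.I) * x k - y k)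

/-- Sup-norm distance up to a global phase. -/
def dinf (x y : Fin n → ℂ) : ℝ :=
  ⨅ θ : ℝ, linfnorm (fun k => Complex.exp (θ * Complex.I) * x k - y k)

/-- ℓ² operator (spectral) norm of a matrix. -/
def opNorm (A : Matrix (Fin n) (Fin n) ℂ) : ℝ :=
  ⨆ u : {u : Fin n → ℂ // l2norm u = 1}, l2norm (A.mulVec u)

/-- Entrywise projection to the unit circle (on nonzero entries). -/
def proj (v : Fin n → ℂ) : Fin n → ℂ :=
  fun k => v k / (‖v k‖ : ℂ)

/-- The rank-one matrix `z z*`. -/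
def outer (z : Fin n → ℂ) : Matrix (Fin n) (Fin n) ℂ :=
  Matrix.of fun i j => z i * (starRingEnd ℂ) (z j)

/-- The operator `ℒ v = (z*v/n) z + (σ/n) W v`. -/
def Lop (z : Fin n → ℂ) (σ : ℝ) (W : Matrix (Fin n) (Fin n) ℂ) (v : Fin n → ℂ) : Fin n → ℂ :=
  (herm z v / (n : ℂ)) • z + (σ / (n : ℝ)) • W.mulVec v

/-!
For nonzero vectors of a real inner product space,
`‖x - y‖² = (‖x‖ - ‖y‖)² + ‖x‖ ‖y‖ ‖x/‖x‖ - y/‖y‖‖²`, so normalization is `r⁻¹`-Lipschitz on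
`{‖x‖ ≥ r}`. Applied entrywise with `r = 1 - ε` this bounds `‖e^{iθ} 𝒫w - 𝒫v‖₂` by
`(1 - ε)⁻¹ ‖e^{iθ} w - v‖₂` for every `θ`, since a global phase commutes with `𝒫`; taking the
infimum over `θ` gives the claim.
-/

section Normalize

variable {F : Type*} [NormedAddCommGroup F] [InnerProductSpace ℝ F]

theorem norm_sub_sq_eq_sq_sub_add_mul_norm_normalize_sub_sq {x y : F} (hx : x ≠ 0)
    (hy : y ≠ 0) :
    ‖x - y‖ ^ 2 = (‖x‖ - ‖y‖) ^ 2 + ‖x‖ * ‖y‖ * ‖‖x‖⁻¹ • x - ‖y‖⁻¹ • y‖ ^ 2 := by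
  have ha : ‖x‖ ≠ 0 := norm_ne_zero_iff.mpr hx
  have hb : ‖y‖ ≠ 0 := norm_ne_zero_iff.mpr hy
  rw [norm_sub_sq_real, norm_sub_sq_real, norm_smul, norm_smul, real_inner_smul_left,
    real_inner_smul_right, Real.norm_of_nonneg (by positivity),
    Real.norm_of_nonneg (by positivity)]
  field_simp
  ring

theorem norm_normalize_sub_normalize_le {r : ℝ} (hr : 0 < r) {x y : F} (hx : r ≤ ‖x‖)
    (hy : r ≤ ‖y‖) :
    ‖‖x‖⁻¹ • x - ‖y‖⁻¹ • y‖ ≤ r⁻¹ * ‖x - y‖ := by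
  have hx0 : x ≠ 0 := norm_pos_iff.mp (hr.trans_le hx)
  have hy0 : y ≠ 0 := norm_pos_iff.mp (hr.trans_le hy)
  have hsq := norm_sub_sq_eq_sq_sub_add_mul_norm_normalize_sub_sq hx0 hy0
  rw [le_inv_mul_iff₀ hr]
  refine le_of_pow_le_pow_left₀ two_ne_zero (norm_nonneg _) ?_
  have hrr : r ^ 2 ≤ ‖x‖ * ‖y‖ := by rw [sq]; exact mul_le_mul hx hy hr.le (hr.le.trans hx)
  calc (r * ‖‖x‖⁻¹ • x - ‖y‖⁻¹ • y‖) ^ 2 = r ^ 2 * ‖‖x‖⁻¹ • x - ‖y‖⁻¹ • y‖ ^ 2 := mul_pow ..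
    _ ≤ ‖x‖ * ‖y‖ * ‖‖x‖⁻¹ • x - ‖y‖⁻¹ • y‖ ^ 2 := by gcongr
    _ ≤ ‖x - y‖ ^ 2 := by rw [hsq]; exact le_add_of_nonneg_left (sq_nonneg _)

end Normalize

theorem l2norm_le_mul_of_forall_norm_le {c : ℝ} (hc : 0 ≤ c) {f g : Fin n → ℂ}
    (h : ∀ k, ‖f k‖ ≤ c * ‖g k‖) :
    l2norm f ≤ c * l2norm g := by
  rw [l2norm, l2norm, ← Real.sqrt_sq hc, ← Real.sqrt_mul (sq_nonneg c), Finset.mul_sum]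
  gcongr with k
  calc ‖f k‖ ^ 2 ≤ (c * ‖g k‖) ^ 2 := by gcongr; exact h k
    _ = c ^ 2 * ‖g k‖ ^ 2 := mul_pow c _ 2

theorem l2norm_nonneg (v : Fin n → ℂ) : 0 ≤ l2norm v := Real.sqrt_nonneg _

theorem div_norm_eq_smul (z : ℂ) : z / (‖z‖ : ℂ) = ‖z‖⁻¹ • z := by
  rw [Complex.real_smul, Complex.ofReal_inv, div_eq_inv_mul]

theorem mul_proj_apply {u : ℂ} (hu : ‖u‖ = 1) (w : Fin n → ℂ) (k : Fin n) :
    u * proj w k = ‖u * w k‖⁻¹ • (u * w k) := by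
  rw [proj, ← div_norm_eq_smul, norm_mul, hu, one_mul, mul_div_assoc]

theorem stmt3_general (n : ℕ) (ε : ℝ) (hε1 : ε < 1) (w v : Fin n → ℂ)
    (hw : ∀ k, 1 - ε ≤ ‖w k‖) (hv : ∀ k, 1 - ε ≤ ‖v k‖) :
    d2 (proj w) (proj v) ≤ (1 - ε)⁻¹ * d2 w v := by
  have hr : 0 < 1 - ε := sub_pos.mpr hε1
  rw [d2, d2, Real.mul_iInf_of_nonneg (inv_nonneg.mpr hr.le)]
  refine ciInf_mono ⟨0, Set.forall_mem_range.mpr fun _ => l2norm_nonneg _⟩ fun θ => ?_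
  refine l2norm_le_mul_of_forall_norm_le (inv_nonneg.mpr hr.le) fun k => ?_
  have hu : ‖Complex.exp (θ * Complex.I)‖ = 1 := Complex.norm_exp_ofReal_mul_I θ
  rw [mul_proj_apply hu, proj, div_norm_eq_smul]
  refine norm_normalize_sub_normalize_le hr ?_ (hv k)
  rw [norm_mul, hu, one_mul]
  exact hw k

/-- entrywise projection `𝒫` is `(1-ε)⁻¹`-Lipschitz for `d₂` on vectors whose
entries all have modulus at least `1 - ε`. -/
theorem stmt3 (n : ℕ) (ε : ℝ) (hε0 : 0 ≤ ε) (hε1 : ε < 1) (w v : Fin n → ℂ)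
    (hw : ∀ k, 1 - ε ≤ ‖w k‖) (hv : ∀ k, 1 - ε ≤ ‖v k‖) :
    d2 (proj w) (proj v) ≤ (1 - ε)⁻¹ * d2 w v :=
  stmt3_general n ε hε1 w v hw hv

end PhaseSync
end
end

section
/- Let A, E ∈ ℂ^{n×n} be Hermitian, Ā = A + E, and δ = λ₁(A) - λ₂(A) the gap between the top two eigenvalues of A. Let u, ū be leading (unit-eigenvalue) eigenvectors of A and Ā respectively, normalized so ‖u‖₂ = ‖ū‖₂ = √n. If δ > ‖E‖₂ (operator norm), then d₂(ū, u) ≤ √2 ‖E u‖₂ / (δ - ‖E‖₂). -/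
/-!
Work in `EuclideanSpace ℂ (Fin n)` with `B = A + E`, and let `w` be the component of `u` orthogonal
to `ū`. Since `‖u‖ = ‖ū‖`, rotating `ū` by the phase of `⟪ū, u⟫` and applying Pythagoras gives
`d₂(ū, u) ≤ √2 ‖w‖`. As `(B - λ₁) u = E u` and `ū` is an eigenvector of `B`,
`re ⟪w, (λ₁ - B) w⟫ = -re ⟪w, E u⟫ ≤ ‖w‖ ‖E u‖`. Finally, because `ū` is a top eigenvector of `B`,
the quadratic form of `B` on `ūᗮ` is at most its second eigenvalue, which by the min-max argument
(a plane meets the hyperplane `uᗮ`, on which the form of `A` is at most `λ₂`) is at most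
`λ₂ + ‖E‖`. Hence `(λ₁ - λ₂ - ‖E‖) ‖w‖ ≤ ‖E u‖`.
-/

noncomputable section

open RCLike InnerProductSpace

section Form

variable {𝕜 V : Type*} [RCLike 𝕜] [NormedAddCommGroup V] [InnerProductSpace 𝕜 V]

lemma LinearMap.re_inner_smul_apply_smul (T : V →ₗ[𝕜] V) (a : 𝕜) (x : V) :
    re ⟪a • x, T (a • x)⟫_𝕜 = ‖a‖ ^ 2 * re ⟪x, T x⟫_𝕜 := by
  rw [map_smul, inner_smul_left, inner_smul_right, ← mul_assoc, RCLike.conj_mul,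
    ← RCLike.ofReal_pow, RCLike.re_ofReal_mul]

lemma LinearMap.IsSymmetric.re_inner_add_apply_add {T : V →ₗ[𝕜] V} (hT : T.IsSymmetric)
    {x y : V} (h : ⟪x, T y⟫_𝕜 = 0) :
    re ⟪x + y, T (x + y)⟫_𝕜 = re ⟪x, T x⟫_𝕜 + re ⟪y, T y⟫_𝕜 := by
  have h' : ⟪y, T x⟫_𝕜 = 0 := by rw [← hT, ← inner_conj_symm, h, map_zero]
  simp only [map_add, inner_add_left, inner_add_right, h, h', add_zero, zero_add]

lemma re_inner_ofReal_smul_self (μ : ℝ) (v : V) : re ⟪v, (μ : 𝕜) • v⟫_𝕜 = μ * ‖v‖ ^ 2 := by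
  rw [inner_smul_right, inner_self_eq_norm_sq_to_K, ← RCLike.ofReal_pow, ← RCLike.ofReal_mul,
    RCLike.ofReal_re]

lemma LinearMap.IsSymmetric.re_inner_apply_le_of_inner_eigenvector_eq_zero
    {T : V →ₗ[𝕜] V} (hT : T.IsSymmetric) {u v x : V} {μ c : ℝ}
    (hc : ∀ y, ⟪u, y⟫_𝕜 = 0 → re ⟪y, T y⟫_𝕜 ≤ c * ‖y‖ ^ 2)
    (htop : ∀ y, re ⟪y, T y⟫_𝕜 ≤ μ * ‖y‖ ^ 2)
    (hv : T v = (μ : 𝕜) • v) (hv0 : v ≠ 0) (hx : ⟪v, x⟫_𝕜 = 0) :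
    re ⟪x, T x⟫_𝕜 ≤ c * ‖x‖ ^ 2 := by
  rcases le_or_gt μ c with hμc | hcμ
  · exact (htop x).trans (by gcongr)
  by_contra! hlt
  have hTv : re ⟪v, T v⟫_𝕜 = μ * ‖v‖ ^ 2 := by rw [hv, re_inner_ofReal_smul_self]
  have hv2 : 0 < ‖v‖ ^ 2 := by positivity
  by_cases hα : ⟪u, v⟫_𝕜 = 0
  · nlinarith [hc v hα]
  -- `re ⟪y, T y⟫ - c ‖y‖ ^ 2` is positive definite on `span {x, v}`, a plane that meets `uᗮ`
  set p := ⟪u, v⟫_𝕜 • x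
  set r := (-⟪u, x⟫_𝕜) • v
  have hxv : ⟪x, v⟫_𝕜 = 0 := by rw [← inner_conj_symm, hx, map_zero]
  have hpr : ⟪p, r⟫_𝕜 = 0 := by simp [p, r, inner_smul_left, inner_smul_right, hxv]
  have hpTr : ⟪p, T r⟫_𝕜 = 0 := by
    simp [p, r, hv, inner_smul_left, inner_smul_right, hxv]
  have hy : ⟪u, p + r⟫_𝕜 = 0 := by
    simp only [p, r, inner_add_right, inner_smul_right]; ring
  have hform := hc _ hy
  rw [hT.re_inner_add_apply_add hpTr, norm_add_sq (𝕜 := 𝕜), hpr, map_zero, mul_zero, add_zero,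
    LinearMap.re_inner_smul_apply_smul, LinearMap.re_inner_smul_apply_smul, norm_smul, norm_smul,
    hTv] at hform
  have hα' : 0 < ‖⟪u, v⟫_𝕜‖ ^ 2 := by positivity
  nlinarith [mul_lt_mul_of_pos_left hlt hα', mul_nonneg (sq_nonneg ‖-⟪u, x⟫_𝕜‖) hv2.le]

lemma sub_mul_norm_le_of_re_inner_apply_le {T : V →ₗ[𝕜] V} {u v w e : V} {t : 𝕜}
    {lam μ c : ℝ} (hv : T v = (μ : 𝕜) • v) (hu : T u = (lam : 𝕜) • u + e)
    (huw : u = w + t • v) (hw : ⟪v, w⟫_𝕜 = 0) (hc : re ⟪w, T w⟫_𝕜 ≤ c * ‖w‖ ^ 2) :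
    (lam - c) * ‖w‖ ≤ ‖e‖ := by
  have hwv : ⟪w, v⟫_𝕜 = 0 := by rw [← inner_conj_symm, hw, map_zero]
  have hTw : T w = (lam : 𝕜) • w + e + (((lam : 𝕜) - μ) * t) • v := by
    rw [eq_sub_of_add_eq huw.symm, map_sub, hu, map_smul, hv, huw]; module
  have hform : re ⟪w, T w⟫_𝕜 = lam * ‖w‖ ^ 2 + re ⟪w, e⟫_𝕜 := by
    rw [hTw, inner_add_right, inner_add_right, inner_smul_right _ v, hwv, mul_zero, add_zero,
      map_add, re_inner_ofReal_smul_self]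
  have hcs : -re ⟪w, e⟫_𝕜 ≤ ‖w‖ * ‖e‖ :=
    (neg_le_abs _).trans ((abs_re_le_norm _).trans (norm_inner_le_norm _ _))
  rcases (norm_nonneg w).eq_or_lt with hw0 | hw0
  · rw [← hw0, mul_zero]; exact norm_nonneg e
  · nlinarith

end Form

section Phase

variable {V : Type*} [NormedAddCommGroup V] [InnerProductSpace ℂ V]

open Complex in
lemma norm_exp_arg_smul_sub_le {u v w : V} {t : ℂ} (huw : u = w + t • v) (hw : ⟪v, w⟫_ℂ = 0)
    (hnorm : ‖u‖ = ‖v‖) : ‖exp (arg t * I) • v - u‖ ≤ √2 * ‖w‖ := by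
  set c := exp (arg t * I)
  have hc : ‖c‖ = 1 := norm_exp_ofReal_mul_I _
  have hsplit : c • v - u = (((1 - ‖t‖ : ℝ) : ℂ) * c) • v - w := by
    have ht : t = ‖t‖ * c := (norm_mul_exp_arg_mul_I t).symm
    rw [huw]; nth_rewrite 1 [ht]; push_cast; module
  have hv : ‖v‖ ^ 2 = ‖t‖ ^ 2 * ‖v‖ ^ 2 + ‖w‖ ^ 2 := by
    have hwv : ⟪w, t • v⟫_ℂ = 0 := by
      rw [inner_smul_right, ← inner_conj_symm, hw, map_zero, mul_zero]
    nth_rewrite 1 [← hnorm]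
    rw [huw, norm_add_sq (𝕜 := ℂ), hwv, map_zero, norm_smul]; ring
  have hsq : ‖c • v - u‖ ^ 2 = (1 - ‖t‖) ^ 2 * ‖v‖ ^ 2 + ‖w‖ ^ 2 := by
    have horth : ⟪(((1 - ‖t‖ : ℝ) : ℂ) * c) • v, w⟫_ℂ = 0 := by rw [inner_smul_left, hw, mul_zero]
    rw [hsplit, norm_sub_sq (𝕜 := ℂ), horth, map_zero, norm_smul, norm_mul, hc, mul_one,
      norm_real, Real.norm_eq_abs, mul_pow, sq_abs]; ring
  -- `‖t‖ ≤ 1` unless `v = 0`, since `‖t • v‖ ≤ ‖u‖ = ‖v‖`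
  have ht : 0 ≤ (1 - ‖t‖) * ‖v‖ ^ 2 := by nlinarith [norm_nonneg t, sq_nonneg ‖w‖]
  refine le_of_pow_le_pow_left₀ two_ne_zero (by positivity) ?_
  rw [mul_pow, Real.sq_sqrt zero_le_two, hsq]
  nlinarith [mul_nonneg (norm_nonneg t) ht]

end Phase

section Eigenbasis

variable {𝕜 V ι : Type*} [RCLike 𝕜] [NormedAddCommGroup V] [InnerProductSpace 𝕜 V] [Fintype ι]
  {T : V →ₗ[𝕜] V} {b : OrthonormalBasis ι 𝕜 V} {eig : ι → ℝ}

namespace LinearMap.IsSymmetric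

lemma inner_eigenbasis_apply (hT : T.IsSymmetric) (hb : ∀ i, T (b i) = (eig i : 𝕜) • b i)
    (i : ι) (x : V) : ⟪b i, T x⟫_𝕜 = eig i * ⟪b i, x⟫_𝕜 := by
  rw [← hT, hb, inner_smul_left, conj_ofReal]

lemma re_inner_apply_eq_sum (hT : T.IsSymmetric) (hb : ∀ i, T (b i) = (eig i : 𝕜) • b i)
    (x : V) : re ⟪x, T x⟫_𝕜 = ∑ i, eig i * ‖⟪b i, x⟫_𝕜‖ ^ 2 := by
  rw [← b.sum_inner_mul_inner, map_sum]
  refine Finset.sum_congr rfl fun i _ => ?_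
  rw [hT.inner_eigenbasis_apply hb, ← inner_conj_symm, mul_left_comm, RCLike.conj_mul,
    ← RCLike.ofReal_pow, ← RCLike.ofReal_mul, RCLike.ofReal_re]

lemma re_inner_apply_le (hT : T.IsSymmetric) (hb : ∀ i, T (b i) = (eig i : 𝕜) • b i)
    {x : V} {c : ℝ} (h : ∀ i, ⟪b i, x⟫_𝕜 ≠ 0 → eig i ≤ c) : re ⟪x, T x⟫_𝕜 ≤ c * ‖x‖ ^ 2 := by
  rw [hT.re_inner_apply_eq_sum hb, ← b.sum_sq_norm_inner_right, Finset.mul_sum]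
  refine Finset.sum_le_sum fun i _ => ?_
  by_cases hi : ⟪b i, x⟫_𝕜 = 0
  · simp [hi]
  · exact mul_le_mul_of_nonneg_right (h i hi) (sq_nonneg _)

lemma inner_eigenbasis_eq_zero_of_inner_eq_zero (hT : T.IsSymmetric)
    (hb : ∀ i, T (b i) = (eig i : 𝕜) • b i) {u x : V} {lam : ℝ} {i₀ : ι}
    (hu : T u = (lam : 𝕜) • u) (hu0 : u ≠ 0) (heig : ∀ i, i ≠ i₀ → eig i ≠ lam)
    (hx : ⟪u, x⟫_𝕜 = 0) : ⟪b i₀, x⟫_𝕜 = 0 := by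
  have hcoef : ∀ i, i ≠ i₀ → ⟪b i, u⟫_𝕜 = 0 := fun i hi => by
    have h := hT.inner_eigenbasis_apply hb i u
    rw [hu, inner_smul_right] at h
    exact (mul_eq_mul_right_iff.1 h.symm).resolve_left (by exact_mod_cast heig i hi)
  have hcoef₀ : ⟪b i₀, u⟫_𝕜 ≠ 0 := fun h => hu0 <| by
    rw [← b.sum_repr' u]
    exact Finset.sum_eq_zero fun i _ => by
      rcases eq_or_ne i i₀ with rfl | hi
      · rw [h, zero_smul]
      · rw [hcoef i hi, zero_smul]
  rw [← b.sum_inner_mul_inner, Finset.sum_eq_single i₀ (fun i _ hi => by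
    rw [← inner_conj_symm, hcoef i hi, map_zero, zero_mul]) (by simp)] at hx
  exact (mul_eq_zero.1 hx).resolve_left (by rwa [← inner_conj_symm, map_eq_zero])

end LinearMap.IsSymmetric

lemma Matrix.IsHermitian.toEuclideanLin_eigenvectorBasis [DecidableEq ι] {M : Matrix ι ι 𝕜}
    (hM : M.IsHermitian) (i : ι) :
    M.toEuclideanLin (hM.eigenvectorBasis i) = (hM.eigenvalues i : 𝕜) • hM.eigenvectorBasis i := by
  rw [Matrix.toLpLin_apply, hM.mulVec_eigenvectorBasis, RCLike.real_smul_eq_coe_smul (K := 𝕜)]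
  rfl

end Eigenbasis

namespace Matrix.IsHermitian

variable {𝕜 ι : Type*} [RCLike 𝕜] [Fintype ι] [DecidableEq ι] {M : Matrix ι ι 𝕜}

lemma re_inner_toEuclideanLin_le (hM : M.IsHermitian) {μ : ℝ}
    (hμ : ∀ ν : ℝ, (∃ v : ι → 𝕜, v ≠ 0 ∧ M *ᵥ v = (ν : 𝕜) • v) → ν ≤ μ)
    (x : EuclideanSpace 𝕜 ι) : re ⟪x, M.toEuclideanLin x⟫_𝕜 ≤ μ * ‖x‖ ^ 2 := by
  refine (isSymmetric_toEuclideanLin_iff.2 hM).re_inner_apply_le hM.toEuclideanLin_eigenvectorBasis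
    fun i _ => hμ _ ⟨WithLp.ofLp (hM.eigenvectorBasis i), fun h => ?_, ?_⟩
  · exact hM.eigenvectorBasis.orthonormal.ne_zero i (by simpa using congrArg (WithLp.toLp 2) h)
  · rw [hM.mulVec_eigenvectorBasis, RCLike.real_smul_eq_coe_smul (K := 𝕜)]

lemma re_inner_toEuclideanLin_le_of_inner_eq_zero (hM : M.IsHermitian) {u x : EuclideanSpace 𝕜 ι}
    {lam₁ lam₂ : ℝ} {i₀ : ι} (h₂ : ∀ i, i ≠ i₀ → hM.eigenvalues i ≤ lam₂) (hlam : lam₂ < lam₁)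
    (hu : M.toEuclideanLin u = (lam₁ : 𝕜) • u) (hu0 : u ≠ 0) (hx : ⟪u, x⟫_𝕜 = 0) :
    re ⟪x, M.toEuclideanLin x⟫_𝕜 ≤ lam₂ * ‖x‖ ^ 2 := by
  have hT := isSymmetric_toEuclideanLin_iff.2 hM
  refine hT.re_inner_apply_le hM.toEuclideanLin_eigenvectorBasis fun i hi => ?_
  rcases eq_or_ne i i₀ with rfl | hi₀
  · exact absurd (hT.inner_eigenbasis_eq_zero_of_inner_eq_zero hM.toEuclideanLin_eigenvectorBasis
      hu hu0 (fun j hj => ((h₂ j hj).trans_lt hlam).ne) hx) hi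
  · exact h₂ i hi₀

end Matrix.IsHermitian

namespace PhaseSync

open Complex InnerProductSpace WithLp Matrix

lemma l2norm_eq_norm {n : ℕ} (v : Fin n → ℂ) : l2norm v = ‖toLp 2 v‖ := by
  rw [EuclideanSpace.norm_eq]; rfl

lemma d2_le_norm {n : ℕ} (x y : Fin n → ℂ) (θ : ℝ) :
    d2 x y ≤ ‖exp (θ * I) • toLp 2 x - toLp 2 y‖ :=
  (ciInf_le ⟨0, by rintro _ ⟨θ, rfl⟩; exact Real.sqrt_nonneg _⟩ θ).trans_eq (l2norm_eq_norm _)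

lemma norm_toEuclideanLin_le_opNorm {n : ℕ} (E : Matrix (Fin n) (Fin n) ℂ)
    (x : EuclideanSpace ℂ (Fin n)) : ‖E.toEuclideanLin x‖ ≤ opNorm E * ‖x‖ := by
  rcases eq_or_ne x 0 with rfl | hx
  · simp
  set T := LinearMap.toContinuousLinearMap E.toEuclideanLin
  have hbdd : BddAbove (Set.range fun u : {u : Fin n → ℂ // l2norm u = 1} => l2norm (E *ᵥ u)) := by
    refine ⟨‖T‖, ?_⟩
    rintro _ ⟨⟨u, hu⟩, rfl⟩
    have h := T.le_opNorm (toLp 2 u)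
    rw [← l2norm_eq_norm u, hu, mul_one] at h
    exact (l2norm_eq_norm _).trans_le h
  have hunit : l2norm (ofLp ((‖x‖⁻¹ : ℂ) • x)) = 1 := by
    rw [l2norm_eq_norm]; simp [norm_smul, hx]
  have h : ‖E.toEuclideanLin ((‖x‖⁻¹ : ℂ) • x)‖ ≤ opNorm E := by
    have h := le_ciSup hbdd ⟨_, hunit⟩
    rw [l2norm_eq_norm] at h
    exact h
  rw [map_smul, norm_smul, norm_inv, Complex.norm_real, norm_norm,
    inv_mul_le_iff₀ (norm_pos_iff.2 hx), mul_comm] at h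
  exact h

lemma re_inner_toEuclideanLin_le_opNorm {n : ℕ} (E : Matrix (Fin n) (Fin n) ℂ)
    (x : EuclideanSpace ℂ (Fin n)) : RCLike.re ⟪x, E.toEuclideanLin x⟫_ℂ ≤ opNorm E * ‖x‖ ^ 2 :=
  calc RCLike.re ⟪x, E.toEuclideanLin x⟫_ℂ ≤ ‖x‖ * ‖E.toEuclideanLin x‖ :=
        (RCLike.re_le_norm _).trans (norm_inner_le_norm _ _)
    _ ≤ ‖x‖ * (opNorm E * ‖x‖) := by gcongr; exact norm_toEuclideanLin_le_opNorm E x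
    _ = opNorm E * ‖x‖ ^ 2 := by ring

theorem stmt4_general (n : ℕ) (A E : Matrix (Fin n) (Fin n) ℂ)
    (hA : A.IsHermitian) (hE : E.IsHermitian)
    (lam1 lam2 : ℝ) (i0 : Fin n)
    (h2 : ∀ i, i ≠ i0 → hA.eigenvalues i ≤ lam2)
    (hgap : opNorm E < lam1 - lam2)
    (u ub : Fin n → ℂ)
    (hu : A.mulVec u = (lam1 : ℂ) • u) (hun : l2norm u = Real.sqrt n)
    (mu : ℝ)
    (hub : (A + E).mulVec ub = (mu : ℂ) • ub) (hubn : l2norm ub = Real.sqrt n)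
    (hmu : ∀ ν : ℝ, (∃ v : Fin n → ℂ, v ≠ 0 ∧ (A + E).mulVec v = (ν : ℂ) • v) → ν ≤ mu) :
    d2 ub u ≤ Real.sqrt 2 * l2norm (E.mulVec u) / (lam1 - lam2 - opNorm E) := by
  set U := toLp 2 u
  set Ub := toLp 2 ub
  have hB : (A + E).IsHermitian := hA.add hE
  have hAU : A.toEuclideanLin U = (lam1 : ℂ) • U := congrArg (toLp 2) hu
  have hBUb : (A + E).toEuclideanLin Ub = (mu : ℂ) • Ub := congrArg (toLp 2) hub
  have hBU : (A + E).toEuclideanLin U = (lam1 : ℂ) • U + E.toEuclideanLin U := by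
    rw [map_add, LinearMap.add_apply, hAU]
  have hnorm : ‖U‖ = ‖Ub‖ := by rw [← l2norm_eq_norm, ← l2norm_eq_norm, hun, hubn]
  set w := U - (ℂ ∙ Ub).starProjection U
  obtain ⟨t, ht⟩ := Submodule.mem_span_singleton.1 ((ℂ ∙ Ub).starProjection_apply_mem U)
  have huw : U = w + t • Ub := by rw [ht, sub_add_cancel]
  have hw : ⟪Ub, w⟫_ℂ = 0 := Submodule.mem_orthogonal_singleton_iff_inner_right.1
    ((ℂ ∙ Ub).sub_starProjection_mem_orthogonal U)
  have hgapw : (lam1 - lam2 - opNorm E) * ‖w‖ ≤ ‖E.toEuclideanLin U‖ := by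
    rcases eq_or_ne U 0 with hU | hU
    · simp [w, hU]
    have hε : 0 ≤ opNorm E := Real.iSup_nonneg fun _ => Real.sqrt_nonneg _
    have hUb : Ub ≠ 0 := norm_ne_zero_iff.1 (hnorm ▸ norm_ne_zero_iff.2 hU)
    have hweyl : RCLike.re ⟪w, (A + E).toEuclideanLin w⟫_ℂ ≤ (lam2 + opNorm E) * ‖w‖ ^ 2 := by
      refine (isSymmetric_toEuclideanLin_iff.2 hB).re_inner_apply_le_of_inner_eigenvector_eq_zero
        (u := U) (fun y hy => ?_) (hB.re_inner_toEuclideanLin_le hmu) hBUb hUb hw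
      rw [map_add, LinearMap.add_apply, inner_add_right, map_add, add_mul]
      exact add_le_add (hA.re_inner_toEuclideanLin_le_of_inner_eq_zero h2 (by linarith) hAU hU hy)
        (re_inner_toEuclideanLin_le_opNorm E y)
    rw [sub_sub]
    exact sub_mul_norm_le_of_re_inner_apply_le hBUb hBU huw hw hweyl
  calc d2 ub u ≤ √2 * ‖w‖ := (d2_le_norm ub u _).trans (norm_exp_arg_smul_sub_le huw hw hnorm)
    _ ≤ √2 * (l2norm (E *ᵥ u) / (lam1 - lam2 - opNorm E)) := by
      gcongr
      rw [l2norm_eq_norm, le_div_iff₀ (by linarith), mul_comm]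
      exact hgapw
    _ = √2 * l2norm (E *ᵥ u) / (lam1 - lam2 - opNorm E) := (mul_div_assoc _ _ _).symm

/-- Davis–Kahan type bound. Here `lam1` is the largest eigenvalue of the
Hermitian matrix `A` (attained at index `i0`), `lam2` bounds all other eigenvalues,
`u` is a leading eigenvector of `A` and `ub` a leading eigenvector of `A + E`,
both with norm `√n`. -/
theorem stmt4 (n : ℕ) (A E : Matrix (Fin n) (Fin n) ℂ)
    (hA : A.IsHermitian) (hE : E.IsHermitian)
    (lam1 lam2 : ℝ) (i0 : Fin n)
    (h1 : hA.eigenvalues i0 = lam1)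
    (hmax : ∀ i, hA.eigenvalues i ≤ lam1)
    (h2 : ∀ i, i ≠ i0 → hA.eigenvalues i ≤ lam2)
    (hgap : opNorm E < lam1 - lam2)
    (u ub : Fin n → ℂ)
    (hu : A.mulVec u = (lam1 : ℂ) • u) (hun : l2norm u = Real.sqrt n)
    (mu : ℝ)
    (hub : (A + E).mulVec ub = (mu : ℂ) • ub) (hubn : l2norm ub = Real.sqrt n)
    (hmu : ∀ ν : ℝ, (∃ v : Fin n → ℂ, v ≠ 0 ∧ (A + E).mulVec v = (ν : ℂ) • v) → ν ≤ mu) :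
    d2 ub u ≤ Real.sqrt 2 * l2norm (E.mulVec u) / (lam1 - lam2 - opNorm E) :=
  stmt4_general n A E hA hE lam1 lam2 i0 h2 hgap u ub hu hun mu hub hubn hmu

end PhaseSync
end
end

section
/- Let C ∈ ℂ^{n×n} be Hermitian and x ∈ ℂⁿ with all entries of unit modulus. Suppose S := Re(ddiag(C x x*)) - C is positive semidefinite with rank n - 1. Then X = xx* is the unique solution of the SDP max trace(CX) over Hermitian PSD X with unit diagonal, and x is the unique maximizer (up to global phase) of x*Cx over unit-modulus vectors. -/
/-!
The matrix `S = dualCert C x` is a dual certificate for the SDP. For every feasible `Y`,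
`tr(C Y) = ∑ₖ Re((C x x*)ₖₖ) - tr(S Y)`, and `tr(S Y) ≥ 0` because `S` and `Y` are PSD. The
choice of the diagonal makes `Re(x* S x) = 0`, so `x* S x = 0`, hence `S x = 0` and `tr(S x x*) = 0`:
`x x*` is optimal.
An optimal `Y` has `tr(S Y) = 0`, hence `S Y = 0`: every column of `Y` lies in `ker S`, which the
rank assumption makes the line through `x`, and the unit diagonal then forces `Y = x x*`.
A unit-modulus `v` gives the feasible point `v v*` with `tr(C v v*) = v* C v`, and `v v* = x x*`
determines `v` up to a global phase.
-/

noncomputable section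

namespace PhaseSync

open Complex

variable {n : ℕ}

open scoped ComplexOrder

open Matrix

section PosSemidef

variable {𝕜 ι : Type*} [RCLike 𝕜] [Fintype ι]

theorem _root_.Matrix.trace_conjTranspose_mul_self_mul_conjTranspose_mul_self
    (A B : Matrix ι ι 𝕜) :
    (Aᴴ * A * (Bᴴ * B)).trace = ((A * Bᴴ)ᴴ * (A * Bᴴ)).trace := by
  rw [conjTranspose_mul, conjTranspose_conjTranspose, Matrix.mul_assoc B, trace_mul_comm B]
  simp only [Matrix.mul_assoc]

open scoped MatrixOrder Matrix.Norms.L2Operator in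
theorem _root_.Matrix.PosSemidef.exists_eq_conjTranspose_mul_self {A : Matrix ι ι 𝕜}
    (hA : A.PosSemidef) : ∃ B : Matrix ι ι 𝕜, A = Bᴴ * B := by
  classical
  exact CStarAlgebra.nonneg_iff_eq_star_mul_self.mp hA.nonneg

theorem _root_.Matrix.PosSemidef.trace_mul_nonneg {S Y : Matrix ι ι 𝕜} (hS : S.PosSemidef)
    (hY : Y.PosSemidef) : 0 ≤ (S * Y).trace := by
  obtain ⟨A, rfl⟩ := hS.exists_eq_conjTranspose_mul_self
  obtain ⟨B, rfl⟩ := hY.exists_eq_conjTranspose_mul_self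
  rw [trace_conjTranspose_mul_self_mul_conjTranspose_mul_self]
  exact (posSemidef_conjTranspose_mul_self _).trace_nonneg

theorem _root_.Matrix.PosSemidef.mul_eq_zero_of_trace_mul_eq_zero {S Y : Matrix ι ι 𝕜}
    (hS : S.PosSemidef) (hY : Y.PosSemidef) (h : (S * Y).trace = 0) : S * Y = 0 := by
  obtain ⟨A, rfl⟩ := hS.exists_eq_conjTranspose_mul_self
  obtain ⟨B, rfl⟩ := hY.exists_eq_conjTranspose_mul_self
  rw [trace_conjTranspose_mul_self_mul_conjTranspose_mul_self,
    trace_conjTranspose_mul_self_eq_zero_iff] at h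
  rw [Matrix.mul_assoc, ← Matrix.mul_assoc A, ← Matrix.mul_assoc, h, Matrix.mul_zero,
    Matrix.zero_mul]

end PosSemidef

theorem _root_.Matrix.exists_smul_eq_of_mulVec_eq_zero {K ι : Type*} [Field K] [Fintype ι]
    {A : Matrix ι ι K} (hA : A.rank = Fintype.card ι - 1) {x y : ι → K}
    (hx0 : x ≠ 0) (hx : A *ᵥ x = 0) (hy : A *ᵥ y = 0) : ∃ c : K, c • x = y := by
  have hle : Submodule.span K {x} ≤ LinearMap.ker A.mulVecLin :=
    (Submodule.span_singleton_le_iff_mem _ _).mpr hx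
  have hspan : Submodule.span K {x} = LinearMap.ker A.mulVecLin := by
    refine Submodule.eq_of_le_of_finrank_le hle ?_
    have hdim := A.mulVecLin.finrank_range_add_finrank_ker
    have hmono := Submodule.finrank_mono hle
    rw [Module.finrank_fintype_fun_eq_card] at hdim
    rw [finrank_span_singleton hx0] at hmono ⊢
    rw [Matrix.rank] at hA
    omega
  exact Submodule.mem_span_singleton.mp (hspan ▸ hy)

theorem outer_eq_vecMulVec (x : Fin n → ℂ) : outer x = vecMulVec x (star x) := rfl

theorem trace_mul_outer (A : Matrix (Fin n) (Fin n) ℂ) (x : Fin n → ℂ) :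
    (A * outer x).trace = star x ⬝ᵥ A *ᵥ x := by
  rw [outer_eq_vecMulVec, mul_vecMulVec, trace_vecMulVec, dotProduct_comm]

theorem posSemidef_outer (x : Fin n → ℂ) : (outer x).PosSemidef :=
  outer_eq_vecMulVec x ▸ posSemidef_vecMulVec_self_star x

theorem outer_apply_self_eq_one {x : Fin n → ℂ} (hx : ∀ k, ‖x k‖ = 1) (k : Fin n) :
    outer x k k = 1 := by
  simp [outer, Complex.mul_conj', hx k]

theorem exists_phase_of_outer_eq {x v : Fin n → ℂ} (hx : ∀ k, ‖x k‖ = 1)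
    (hv : ∀ k, ‖v k‖ = 1) (h : outer v = outer x) :
    ∃ θ : ℝ, v = fun k => Complex.exp (θ * Complex.I) * x k := by
  rcases isEmpty_or_nonempty (Fin n) with _ | ⟨⟨i⟩⟩
  · exact ⟨0, Subsingleton.elim _ _⟩
  obtain ⟨θ, hθ⟩ := (Complex.norm_eq_one_iff (starRingEnd ℂ (x i) * v i)).mp
    (by rw [norm_mul, RCLike.norm_conj, hx i, hv i, one_mul])
  refine ⟨θ, funext fun k => ?_⟩
  have hki : v k * starRingEnd ℂ (v i) = x k * starRingEnd ℂ (x i) := congrFun (congrFun h k) i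
  have hvi : v i * starRingEnd ℂ (v i) = 1 := outer_apply_self_eq_one hv i
  calc v k = v k * starRingEnd ℂ (v i) * v i := by
        rw [mul_assoc, mul_comm _ (v i), hvi, mul_one]
    _ = _ := by rw [hki, hθ]; ring

def dualCert (C : Matrix (Fin n) (Fin n) ℂ) (x : Fin n → ℂ) : Matrix (Fin n) (Fin n) ℂ :=
  diagonal (fun k => ((((C * outer x) k k).re : ℝ) : ℂ)) - C

section dualCert

variable {C Y : Matrix (Fin n) (Fin n) ℂ} {x : Fin n → ℂ}

theorem trace_dualCert_mul (hdiag : ∀ k, Y k k = 1) :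
    (dualCert C x * Y).trace = ∑ k, ((((C * outer x) k k).re : ℝ) : ℂ) - (C * Y).trace := by
  rw [dualCert, Matrix.sub_mul, trace_sub]
  simp [trace, diagonal_mul, hdiag]

theorem dualCert_mulVec_self (hx : ∀ k, ‖x k‖ = 1) (hS : (dualCert C x).PosSemidef) :
    dualCert C x *ᵥ x = 0 := by
  have hre : (star x ⬝ᵥ dualCert C x *ᵥ x).re = 0 := by
    rw [← trace_mul_outer, trace_dualCert_mul (outer_apply_self_eq_one hx), sub_re, trace, re_sum,
      re_sum]
    simp
  have him := (Complex.le_def.mp (hS.dotProduct_mulVec_nonneg x)).2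
  exact (hS.dotProduct_mulVec_zero_iff x).mp (Complex.ext hre him.symm)

theorem dualCert_mul_outer (hx : ∀ k, ‖x k‖ = 1) (hS : (dualCert C x).PosSemidef) :
    dualCert C x * outer x = 0 := by
  rw [outer_eq_vecMulVec, mul_vecMulVec, dualCert_mulVec_self hx hS, zero_vecMulVec]

theorem trace_mul_outer_sub_trace_mul (hx : ∀ k, ‖x k‖ = 1) (hS : (dualCert C x).PosSemidef)
    (hdiag : ∀ k, Y k k = 1) :
    (C * outer x).trace - (C * Y).trace = (dualCert C x * Y).trace := by
  have hcert := trace_dualCert_mul (C := C) (x := x) (outer_apply_self_eq_one hx)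
  rw [dualCert_mul_outer hx hS, trace_zero] at hcert
  rw [trace_dualCert_mul hdiag]
  linear_combination hcert

theorem exists_smul_eq_of_dualCert_mulVec_eq_zero (hx : ∀ k, ‖x k‖ = 1)
    (hS : (dualCert C x).PosSemidef) (hrank : (dualCert C x).rank = n - 1) {y : Fin n → ℂ}
    (hy : dualCert C x *ᵥ y = 0) : ∃ c : ℂ, c • x = y := by
  rcases isEmpty_or_nonempty (Fin n) with _ | ⟨⟨i⟩⟩
  · exact ⟨0, Subsingleton.elim _ _⟩
  have hx0 : x ≠ 0 := fun h => by simpa [h] using hx i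
  exact exists_smul_eq_of_mulVec_eq_zero (by rwa [Fintype.card_fin]) hx0
    (dualCert_mulVec_self hx hS) hy

theorem eq_outer_of_dualCert_mul_eq_zero (hx : ∀ k, ‖x k‖ = 1)
    (hS : (dualCert C x).PosSemidef) (hrank : (dualCert C x).rank = n - 1)
    (hdiag : ∀ k, Y k k = 1) (h : dualCert C x * Y = 0) : Y = outer x := by
  ext i j
  obtain ⟨c, hc⟩ := exists_smul_eq_of_dualCert_mulVec_eq_zero hx hS hrank
    (y := fun i => Y i j) (funext fun i => congrFun (congrFun h i) j)
  have hcj : c * x j = 1 := by rw [← hdiag j]; exact congrFun hc j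
  have hxj : x j * starRingEnd ℂ (x j) = 1 := outer_apply_self_eq_one hx j
  rw [← congrFun hc i]
  simp only [outer, of_apply, Pi.smul_apply, smul_eq_mul]
  linear_combination (starRingEnd ℂ (x j) * x i) * hcj - c * x i * hxj

theorem trace_mul_le_trace_mul_outer (hx : ∀ k, ‖x k‖ = 1) (hS : (dualCert C x).PosSemidef)
    (hY : Y.PosSemidef) (hdiag : ∀ k, Y k k = 1) : (C * Y).trace ≤ (C * outer x).trace := by
  rw [← sub_nonneg, trace_mul_outer_sub_trace_mul hx hS hdiag]
  exact hS.trace_mul_nonneg hY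

theorem eq_outer_of_trace_mul_eq (hx : ∀ k, ‖x k‖ = 1) (hS : (dualCert C x).PosSemidef)
    (hrank : (dualCert C x).rank = n - 1) (hY : Y.PosSemidef) (hdiag : ∀ k, Y k k = 1)
    (h : (C * Y).trace = (C * outer x).trace) : Y = outer x := by
  refine eq_outer_of_dualCert_mul_eq_zero hx hS hrank hdiag
    (hS.mul_eq_zero_of_trace_mul_eq_zero hY ?_)
  rw [← trace_mul_outer_sub_trace_mul hx hS hdiag, h, sub_self]

end dualCert

theorem stmt9_general (n : ℕ) (C : Matrix (Fin n) (Fin n) ℂ)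
    (x : Fin n → ℂ) (hx : ∀ k, ‖x k‖ = 1)
    (hS : (Matrix.diagonal (fun k => ((((C * outer x) k k).re : ℝ) : ℂ)) - C).PosSemidef)
    (hrank : (Matrix.diagonal (fun k => ((((C * outer x) k k).re : ℝ) : ℂ)) - C).rank = n - 1) :
    (∀ Y : Matrix (Fin n) (Fin n) ℂ, Y.PosSemidef → (∀ k, Y k k = 1) →
      ((C * Y).trace).re ≤ ((C * outer x).trace).re ∧
      (((C * Y).trace).re = ((C * outer x).trace).re → Y = outer x)) ∧
    (∀ v : Fin n → ℂ, (∀ k, ‖v k‖ = 1) →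
      (dotProduct (star v) (C.mulVec v)).re ≤
        (dotProduct (star x) (C.mulVec x)).re ∧
      ((dotProduct (star v) (C.mulVec v)).re =
          (dotProduct (star x) (C.mulVec x)).re →
        ∃ θ : ℝ, v = fun k => Complex.exp (θ * Complex.I) * x k)) := by
  have sdp : ∀ Y : Matrix (Fin n) (Fin n) ℂ, Y.PosSemidef → (∀ k, Y k k = 1) →
      ((C * Y).trace).re ≤ ((C * outer x).trace).re ∧
      (((C * Y).trace).re = ((C * outer x).trace).re → Y = outer x) := by
    intro Y hY hdiag
    have hle := Complex.le_def.mp (trace_mul_le_trace_mul_outer hx hS hY hdiag)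
    exact ⟨hle.1, fun h => eq_outer_of_trace_mul_eq hx hS hrank hY hdiag (Complex.ext h hle.2)⟩
  refine ⟨sdp, fun v hv => ?_⟩
  rw [← trace_mul_outer, ← trace_mul_outer]
  obtain ⟨hle, huniq⟩ := sdp (outer v) (posSemidef_outer v) (outer_apply_self_eq_one hv)
  exact ⟨hle, fun h => exists_phase_of_outer_eq hx hv (huniq h)⟩

/-- if `S = Re(ddiag(C x x*)) - C` is PSD of rank `n-1`, then `x x*` is the
unique SDP solution and `x` is the unique (up to global phase) maximizer of `v*Cv`
over unit-modulus vectors. -/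
theorem stmt9 (n : ℕ) (C : Matrix (Fin n) (Fin n) ℂ) (hC : C.IsHermitian)
    (x : Fin n → ℂ) (hx : ∀ k, ‖x k‖ = 1)
    (hS : (Matrix.diagonal (fun k => ((((C * outer x) k k).re : ℝ) : ℂ)) - C).PosSemidef)
    (hrank : (Matrix.diagonal (fun k => ((((C * outer x) k k).re : ℝ) : ℂ)) - C).rank = n - 1) :
    (∀ Y : Matrix (Fin n) (Fin n) ℂ, Y.PosSemidef → (∀ k, Y k k = 1) →
      ((C * Y).trace).re ≤ ((C * outer x).trace).re ∧
      (((C * Y).trace).re = ((C * outer x).trace).re → Y = outer x)) ∧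
    (∀ v : Fin n → ℂ, (∀ k, ‖v k‖ = 1) →
      (dotProduct (star v) (C.mulVec v)).re ≤
        (dotProduct (star x) (C.mulVec x)).re ∧
      ((dotProduct (star v) (C.mulVec v)).re =
          (dotProduct (star x) (C.mulVec x)).re →
        ∃ θ : ℝ, v = fun k => Complex.exp (θ * Complex.I) * x k)) :=
  stmt9_general n C x hx hS hrank

end PhaseSync
end
end
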